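/- Let α, β, a₁, a₀, c₂ be real numbers with β ≠ 0. Then the cubic polynomial V(ζ) = (β/18)ζ³ + c₂ζ² + ((12c₂² − 3a₁)/(2β))ζ + (12c₂³ − 3a₁c₂ − βa₀)/β² satisfies α V''''(ζ) + V'(ζ) V''(ζ) − β V(ζ) = a₁ζ + a₀ for all ζ ∈ ℝ. This gives a one-parameter (c₂) family of cubic solutions of the reduced travelling-wave ODE with linear forcing (a₃ = a₂ = 0). -/

import Mathlib

lemma deriv_cubic (a b c d : ℝ) :
    deriv (fun z : ℝ => a * z ^ 3 + b * z ^ 2 + c * z + d)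
      = fun z => 3 * a * z ^ 2 + 2 * b * z + c := by
  funext z
  have : HasDerivAt (fun z : ℝ => a * z ^ 3 + b * z ^ 2 + c * z + d)
      (3 * a * z ^ 2 + 2 * b * z + c) z := by
    have h := (((hasDerivAt_pow 3 z).const_mul a).add ((hasDerivAt_pow 2 z).const_mul b)).add
      (((hasDerivAt_id z).const_mul c).add_const d)
    have he : (fun x : ℝ => a * x ^ 3 + b * x ^ 2 + (c * id x + d))
        = fun z => a * z ^ 3 + b * z ^ 2 + c * z + d := by funext x; simp; ring
    simp only [Pi.add_def] at h
    rw [he] at h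
    refine h.congr_deriv ?_
    push_cast; ring
  exact this.deriv

lemma deriv_quad (a b c : ℝ) :
    deriv (fun z : ℝ => a * z ^ 2 + b * z + c) = fun z => 2 * a * z + b := by
  funext z
  have : HasDerivAt (fun z : ℝ => a * z ^ 2 + b * z + c) (2 * a * z + b) z := by
    have h := ((hasDerivAt_pow 2 z).const_mul a).add (((hasDerivAt_id z).const_mul b).add_const c)
    have he : (fun x : ℝ => a * x ^ 2 + (b * id x + c))
        = fun z => a * z ^ 2 + b * z + c := by funext x; simp; ring
    simp only [Pi.add_def] at h
    rw [he] at h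
    refine h.congr_deriv ?_
    push_cast; ring
  exact this.deriv

lemma deriv_lin (a b : ℝ) :
    deriv (fun z : ℝ => a * z + b) = fun _ => a := by
  funext z
  have : HasDerivAt (fun z : ℝ => a * z + b) a z := by
    simpa using ((hasDerivAt_id z).const_mul a).add_const b
  exact this.deriv

/-- One-parameter (`c₂`) family of cubic solutions of the reduced travelling-wave ODE
with linear forcing: `V(ζ) = (β/18)ζ³ + c₂ζ² + ((12c₂² − 3a₁)/(2β))ζ
+ (12c₂³ − 3a₁c₂ − βa₀)/β²` satisfies `α V'''' + V' V'' − β V = a₁ζ + a₀`. -/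
theorem cubic_family_two
    (α β a₁ a₀ c₂ : ℝ) (hβ : β ≠ 0) :
    ∀ ζ : ℝ,
      α * iteratedDeriv 4
          (fun z => β / 18 * z ^ 3 + c₂ * z ^ 2 + (12 * c₂ ^ 2 - 3 * a₁) / (2 * β) * z
            + (12 * c₂ ^ 3 - 3 * a₁ * c₂ - β * a₀) / β ^ 2) ζ
        + deriv (fun z => β / 18 * z ^ 3 + c₂ * z ^ 2 + (12 * c₂ ^ 2 - 3 * a₁) / (2 * β) * z
            + (12 * c₂ ^ 3 - 3 * a₁ * c₂ - β * a₀) / β ^ 2) ζ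
          * iteratedDeriv 2
            (fun z => β / 18 * z ^ 3 + c₂ * z ^ 2 + (12 * c₂ ^ 2 - 3 * a₁) / (2 * β) * z
              + (12 * c₂ ^ 3 - 3 * a₁ * c₂ - β * a₀) / β ^ 2) ζ
        - β * (β / 18 * ζ ^ 3 + c₂ * ζ ^ 2 + (12 * c₂ ^ 2 - 3 * a₁) / (2 * β) * ζ
            + (12 * c₂ ^ 3 - 3 * a₁ * c₂ - β * a₀) / β ^ 2)
      = a₁ * ζ + a₀ := by
  intro ζ
  set A := β / 18
  set C := (12 * c₂ ^ 2 - 3 * a₁) / (2 * β)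
  set D := (12 * c₂ ^ 3 - 3 * a₁ * c₂ - β * a₀) / β ^ 2
  have h1 : deriv (fun z : ℝ => A * z ^ 3 + c₂ * z ^ 2 + C * z + D)
      = fun z => 3 * A * z ^ 2 + 2 * c₂ * z + C := deriv_cubic A c₂ C D
  have h2 : iteratedDeriv 2 (fun z : ℝ => A * z ^ 3 + c₂ * z ^ 2 + C * z + D)
      = fun z => 2 * (3 * A) * z + 2 * c₂ := by
    rw [iteratedDeriv_succ, iteratedDeriv_one, h1, deriv_quad]
  have h4 : iteratedDeriv 4 (fun z : ℝ => A * z ^ 3 + c₂ * z ^ 2 + C * z + D)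
      = fun _ => 0 := by
    rw [show (4 : ℕ) = 2 + 1 + 1 by rfl, iteratedDeriv_succ, iteratedDeriv_succ, h2,
      deriv_lin]
    simp [deriv_const]
  rw [h1, h2, h4]
  simp only [A, C, D]
  field_simp
  ring
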